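/- Let (e_j) be a quasi-greedy basis of X with constant K. Then the Lebesgue constant C_N = sup_x ‖x − G_N(x)‖/σ_N(x) satisfies C_N ≥ C̃_N ≥ μ(N)/(3K), where C̃_N = sup_x ‖x − G_N(x)‖/σ̃_N(x). -/

import Mathlib

open Finset NNReal ENNReal Filter

noncomputable section

variable (𝕜 X : Type*) [RCLike 𝕜] [NormedAddCommGroup X] [NormedSpace 𝕜 X]

/-- A normalized Schauder basis of a (real or complex) Banach space, given together with
its biorthogonal coefficient functionals. -/
structure GreedyBasis where
  e : ℕ → X
  coeff : ℕ → X →L[𝕜] 𝕜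
  norm_e : ∀ j, ‖e j‖ = 1
  biorth : ∀ i j, coeff i (e j) = if i = j then 1 else 0
  expansion : ∀ x : X,
    Tendsto (fun n => ∑ j ∈ Finset.range n, coeff j x • e j) atTop (nhds x)

variable {𝕜 X}

namespace GreedyBasis

variable (b : GreedyBasis 𝕜 X)

/-- The coordinate projection `S_A` onto a finite set `A` of indices. -/
def S (A : Finset ℕ) : X →L[𝕜] X := ∑ j ∈ A, (b.coeff j).smulRight (b.e j)

/-- `π` is a greedy (decreasing) rearrangement of the coefficients of `x`. -/
def Greedy (x : X) (π : Equiv.Perm ℕ) : Prop :=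
  ∀ k : ℕ, ‖b.coeff (π (k + 1)) x‖ ≤ ‖b.coeff (π k) x‖

/-- The thresholding greedy algorithm of order `N` (relative to the greedy ordering `π`). -/
def G (N : ℕ) (π : Equiv.Perm ℕ) (x : X) : X :=
  ∑ k ∈ Finset.range N, b.coeff (π k) x • b.e (π k)

/-- The best `N`-term approximation error `σ_N(x)`. -/
def σ (N : ℕ) (x : X) : ℝ≥0∞ :=
  ⨅ (A : Finset ℕ) (_ : A.card ≤ N) (c : ℕ → 𝕜),
    (‖x - ∑ j ∈ A, c j • b.e j‖₊ : ℝ≥0∞)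

/-- The expansional best approximation error `σ̃_N(x)`. -/
def σt (N : ℕ) (x : X) : ℝ≥0∞ :=
  ⨅ (A : Finset ℕ) (_ : A.card = N), (‖x - b.S A x‖₊ : ℝ≥0∞)

/-- `k_N = sup_{|A| ≤ N} ‖S_A‖`. -/
def kN (N : ℕ) : ℝ≥0∞ := ⨆ (A : Finset ℕ) (_ : A.card ≤ N), (‖b.S A‖₊ : ℝ≥0∞)

/-- Right democracy function `h_r(n) = sup_{|A| = n} ‖∑_{j ∈ A} e_j‖`. -/
def hr (n : ℕ) : ℝ≥0∞ := ⨆ (A : Finset ℕ) (_ : A.card = n), (‖∑ j ∈ A, b.e j‖₊ : ℝ≥0∞)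

/-- Left democracy function `h_l(n) = inf_{|A| = n} ‖∑_{j ∈ A} e_j‖`. -/
def hl (n : ℕ) : ℝ≥0∞ := ⨅ (A : Finset ℕ) (_ : A.card = n), (‖∑ j ∈ A, b.e j‖₊ : ℝ≥0∞)

/-- `μ(N) = sup_{1 ≤ n ≤ N} h_r(n)/h_l(n)`. -/
def μ (N : ℕ) : ℝ≥0∞ := ⨆ n ∈ Finset.Icc 1 N, b.hr n / b.hl n

/-- The basis is quasi-greedy with constant `K`:  `‖G_N(x)‖ ≤ K ‖x‖` for every `x`, every `N`,
and every greedy rearrangement. -/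
def QuasiGreedy (K : ℝ≥0) : Prop :=
  ∀ (x : X) (π : Equiv.Perm ℕ), b.Greedy x π → ∀ N : ℕ, ‖b.G N π x‖ ≤ K * ‖x‖

/-- The Lebesgue constant `C_N = sup_x ‖x - G_N(x)‖ / σ_N(x)`. -/
def CN (N : ℕ) : ℝ≥0∞ :=
  ⨆ (x : X) (π : Equiv.Perm ℕ) (_ : b.Greedy x π) (_ : b.σ N x ≠ 0),
    (‖x - b.G N π x‖₊ : ℝ≥0∞) / b.σ N x

/-- `C̃_N = sup_x ‖x - G_N(x)‖ / σ̃_N(x)`. -/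
def CtN (N : ℕ) : ℝ≥0∞ :=
  ⨆ (x : X) (π : Equiv.Perm ℕ) (_ : b.Greedy x π) (_ : b.σt N x ≠ 0),
    (‖x - b.G N π x‖₊ : ℝ≥0∞) / b.σt N x

/-- `D_N = sup_x σ̃_N(x) / σ_N(x)`. -/
def DN (N : ℕ) : ℝ≥0∞ :=
  ⨆ (x : X) (_ : b.σ N x ≠ 0), b.σt N x / b.σ N x

end GreedyBasis
private lemma exists_perm_extend (m : ℕ) (f : ℕ → ℕ)
    (hf : ∀ i < m, ∀ j < m, f i = f j → i = j) :
    ∃ π : Equiv.Perm ℕ, ∀ k < m, π k = f k := by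
  induction m with
  | zero => exact ⟨1, fun k hk => absurd hk (Nat.not_lt_zero k)⟩
  | succ m ih =>
    obtain ⟨π, hπ⟩ := ih (fun i hi j hj h => hf i (by omega) j (by omega) h)
    refine ⟨π.trans (Equiv.swap (π m) (f m)), fun k hk => ?_⟩
    rcases Nat.lt_succ_iff_lt_or_eq.mp hk with hk' | rfl
    · have h1 : π k = f k := hπ k hk'
      have h2 : f k ≠ π m := by
        rw [← h1]; exact fun h => absurd (π.injective h) (Nat.ne_of_lt hk')
      have h3 : f k ≠ f m := fun h =>
        absurd (hf k (by omega) m (by omega) h) (Nat.ne_of_lt hk')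
      simp [Equiv.trans_apply, h1, Equiv.swap_apply_of_ne_of_ne h2 h3]
    · simp [Equiv.trans_apply]

private lemma exists_enum_perm (D A : Finset ℕ) (hDA : Disjoint D A) :
    ∃ π : Equiv.Perm ℕ, (∀ k < D.card, π k ∈ D) ∧
      (∀ k, D.card ≤ k → k < D.card + A.card → π k ∈ A) ∧
      (∀ k, D.card + A.card ≤ k → π k ∉ D ∪ A) ∧
      (Finset.range D.card).image (fun k => π k) = D := by
  classical
  set N := D.card with hN
  set n := A.card with hn
  set f : ℕ → ℕ := fun k =>
    if h : k < N then (D.orderIsoOfFin rfl ⟨k, h⟩ : ℕ)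
    else if h2 : k - N < n then (A.orderIsoOfFin rfl ⟨k - N, h2⟩ : ℕ) else k with hf
  have hfD : ∀ k (h : k < N), f k ∈ D := by
    intro k h; simp only [hf, dif_pos h]; exact (D.orderIsoOfFin rfl ⟨k, h⟩).2
  have hfA : ∀ k (h1 : N ≤ k) (h2 : k < N + n), f k ∈ A := by
    intro k h1 h2
    have h3 : ¬ k < N := by omega
    have h4 : k - N < n := by omega
    simp only [hf, dif_neg h3, dif_pos h4]; exact (A.orderIsoOfFin rfl ⟨k - N, h4⟩).2
  have hinj : ∀ i < N + n, ∀ j < N + n, f i = f j → i = j := by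
    intro i hi j hj h
    rcases lt_or_ge i N with hiN | hiN <;> rcases lt_or_ge j N with hjN | hjN
    · simp only [hf, dif_pos hiN, dif_pos hjN] at h
      have := (D.orderIsoOfFin rfl).injective (Subtype.ext h)
      exact congrArg Fin.val (by exact_mod_cast this)
    · exact absurd h (by
        have h1 := hfD i hiN
        have h2 := hfA j hjN hj
        exact fun hh => (Finset.disjoint_left.mp hDA h1) (hh ▸ h2))
    · exact absurd h.symm (by
        have h1 := hfD j hjN
        have h2 := hfA i hiN hi
        exact fun hh => (Finset.disjoint_left.mp hDA h1) (hh ▸ h2))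
    · have h3 : ¬ i < N := by omega
      have h4 : i - N < n := by omega
      have h5 : ¬ j < N := by omega
      have h6 : j - N < n := by omega
      simp only [hf, dif_neg h3, dif_pos h4, dif_neg h5, dif_pos h6] at h
      have := (A.orderIsoOfFin rfl).injective (Subtype.ext h)
      have : i - N = j - N := congrArg Fin.val (by exact_mod_cast this)
      omega
  obtain ⟨π, hπ⟩ := exists_perm_extend (N + n) f hinj
  have hπD : ∀ k < N, π k ∈ D := fun k hk => by
    rw [hπ k (by omega)]; exact hfD k hk
  have hπA : ∀ k, N ≤ k → k < N + n → π k ∈ A := fun k h1 h2 => by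
    rw [hπ k h2]; exact hfA k h1 h2
  have himage : (Finset.range (N + n)).image (fun k => π k) = D ∪ A := by
    apply Finset.eq_of_subset_of_card_le
    · intro j hj
      simp only [Finset.mem_image, Finset.mem_range] at hj
      obtain ⟨k, hk, rfl⟩ := hj
      rcases lt_or_ge k N with h | h
      · exact Finset.mem_union_left _ (hπD k h)
      · exact Finset.mem_union_right _ (hπA k h hk)
    · rw [Finset.card_union_of_disjoint hDA,
        Finset.card_image_of_injective _ (fun a b hab => π.injective hab),
        Finset.card_range]
  refine ⟨π, hπD, hπA, fun k hk hmem => ?_, ?_⟩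
  · rw [← himage] at hmem
    simp only [Finset.mem_image, Finset.mem_range] at hmem
    obtain ⟨k', hk', he⟩ := hmem
    exact absurd (π.injective he) (by omega)
  · apply Finset.eq_of_subset_of_card_le
    · intro j hj
      simp only [Finset.mem_image, Finset.mem_range] at hj
      obtain ⟨k, hk, rfl⟩ := hj
      exact hπD k hk
    · rw [Finset.card_image_of_injective _ (fun a b hab => π.injective hab),
        Finset.card_range]
private lemma coeff_ind (b : GreedyBasis 𝕜 X) (F : Finset ℕ) (i : ℕ) :
    b.coeff i (∑ j ∈ F, b.e j) = if i ∈ F then 1 else 0 := by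
  rw [map_sum]
  simp only [b.biorth]
  exact Finset.sum_ite_eq F i fun _ => 1

private lemma norm_coeff_ind_le (b : GreedyBasis 𝕜 X) (F : Finset ℕ) (i : ℕ) :
    ‖b.coeff i (∑ j ∈ F, b.e j)‖ ≤ 1 := by
  rw [coeff_ind]
  split_ifs <;> simp

private lemma one_le_mul_norm (b : GreedyBasis 𝕜 X) {K : ℝ≥0} (hK : b.QuasiGreedy K)
    (F : Finset ℕ) (hF : F.Nonempty) : (1 : ℝ) ≤ K * ‖∑ j ∈ F, b.e j‖ := by
  obtain ⟨π, hπF, -, hπout, -⟩ := exists_enum_perm F ∅ (Finset.disjoint_empty_right F)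
  simp only [Finset.card_empty, Nat.add_zero, Finset.union_empty] at hπF hπout
  set x := ∑ j ∈ F, b.e j with hx
  have hcard : 0 < F.card := Finset.card_pos.mpr hF
  have hg : b.Greedy x π := by
    intro k
    rcases lt_or_ge k F.card with h | h
    · calc ‖b.coeff (π (k+1)) x‖ ≤ 1 := norm_coeff_ind_le b F _
        _ = ‖b.coeff (π k) x‖ := by
            rw [coeff_ind, if_pos (hπF k h), norm_one]
    · have h1 : π (k+1) ∉ F := hπout (k+1) (by omega)
      rw [coeff_ind, if_neg h1, norm_zero]
      exact norm_nonneg _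
  have := hK x π hg 1
  rwa [GreedyBasis.G, Finset.sum_range_one, coeff_ind, if_pos (hπF 0 hcard),
    one_smul, b.norm_e] at this
private lemma S_apply (b : GreedyBasis 𝕜 X) (E : Finset ℕ) (x : X) :
    b.S E x = ∑ j ∈ E, b.coeff j x • b.e j := by
  rw [GreedyBasis.S, ContinuousLinearMap.sum_apply]
  simp only [ContinuousLinearMap.smulRight_apply]

private lemma S_ind (b : GreedyBasis 𝕜 X) (E C : Finset ℕ) :
    b.S E (∑ j ∈ C, b.e j) = ∑ j ∈ E ∩ C, b.e j := by
  rw [S_apply]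
  rw [← Finset.sum_ite_mem E C (fun j => b.e j)]
  apply Finset.sum_congr rfl
  intro j hj
  rw [coeff_ind]
  split_ifs with h <;> simp [h]

private lemma sub_S_ind (b : GreedyBasis 𝕜 X) (E C : Finset ℕ) :
    (∑ j ∈ C, b.e j) - b.S E (∑ j ∈ C, b.e j) = ∑ j ∈ C \ (E ∩ C), b.e j := by
  rw [S_ind, sub_eq_iff_eq_add, Finset.sum_sdiff (Finset.inter_subset_right)]

private lemma inv_le_sigt (b : GreedyBasis 𝕜 X) {K : ℝ≥0} (hK : b.QuasiGreedy K)
    {N : ℕ} {C : Finset ℕ} (hC : N < C.card) :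
    ((K : ℝ≥0∞))⁻¹ ≤ b.σt N (∑ j ∈ C, b.e j) := by
  have hK0 : K ≠ 0 := by
    rintro rfl
    have := one_le_mul_norm b hK C (Finset.card_pos.mp (by omega))
    simp at this; linarith
  refine le_iInf fun E => le_iInf fun hE => ?_
  rw [sub_S_ind]
  set F := C \ (E ∩ C) with hF
  have hFne : F.Nonempty := by
    rw [← Finset.card_pos, Finset.card_sdiff_of_subset Finset.inter_subset_right]
    have : (E ∩ C).card ≤ N := hE ▸ Finset.card_le_card Finset.inter_subset_left
    omega
  have h1 : (1 : ℝ) ≤ K * ‖∑ j ∈ F, b.e j‖ := one_le_mul_norm b hK F hFne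
  have hKpos : (0 : ℝ) < K := lt_of_le_of_ne (K.coe_nonneg) (by exact_mod_cast (Ne.symm hK0))
  have h2 : (K : ℝ)⁻¹ ≤ ‖∑ j ∈ F, b.e j‖ := by
    rw [inv_eq_one_div, div_le_iff₀ hKpos]
    linarith [h1]
  rw [← ENNReal.coe_inv hK0, ENNReal.coe_le_coe, ← NNReal.coe_le_coe]
  simpa using h2
private lemma key_div_le (b : GreedyBasis 𝕜 X) {K : ℝ≥0} (hK : b.QuasiGreedy K)
    {N n : ℕ} (hn1 : 1 ≤ n) (hnN : n ≤ N) (A B : Finset ℕ)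
    (hA : A.card = n) (hB : B.card = n) :
    (‖∑ j ∈ A, b.e j‖₊ : ℝ≥0∞) / (‖∑ j ∈ B, b.e j‖₊ : ℝ≥0∞) ≤ b.CtN N := by
  classical
  -- construct D : card N, disjoint from A, containing B \ A
  obtain ⟨T, hTsub, hTcard⟩ := Infinite.exists_superset_card_eq ((B \ A) ∪ A) (N + n) (by
    have h1 : (B \ A).card ≤ n := by
      have := Finset.card_le_card (Finset.sdiff_subset (s := B) (t := A))
      omega
    have := Finset.card_union_le (B \ A) A
    omega)
  set D := T \ A with hD
  have hAT : A ⊆ T := (Finset.subset_union_right).trans hTsub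
  have hDcard : D.card = N := by
    rw [hD, Finset.card_sdiff_of_subset hAT, hTcard, hA]; omega
  have hdisj : Disjoint D A := Finset.sdiff_disjoint
  have hBA : B \ A ⊆ D := fun j hj => by
    rw [hD, Finset.mem_sdiff]
    exact ⟨hTsub (Finset.mem_union_left _ hj), (Finset.mem_sdiff.mp hj).2⟩
  obtain ⟨π, hπD, hπA, hπout, hπim⟩ := exists_enum_perm D A hdisj
  rw [hDcard] at hπD hπA hπout hπim
  rw [hA] at hπA hπout
  set C := D ∪ A with hC
  set x := ∑ j ∈ C, b.e j with hx
  have hCcard : C.card = N + n := by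
    rw [hC, Finset.card_union_of_disjoint hdisj, hDcard, hA]
  have hmem : ∀ k, π k ∈ C ↔ k < N + n := by
    intro k
    constructor
    · intro h
      by_contra hk
      exact hπout k (by omega) h
    · intro h
      rcases lt_or_ge k N with h' | h'
      · exact Finset.mem_union_left _ (hπD k h')
      · exact Finset.mem_union_right _ (hπA k h' h)
  -- greedy
  have hg : b.Greedy x π := by
    intro k
    rcases lt_or_ge k (N + n) with h | h
    · calc ‖b.coeff (π (k+1)) x‖ ≤ 1 := norm_coeff_ind_le b C _
        _ = ‖b.coeff (π k) x‖ := by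
            rw [coeff_ind, if_pos ((hmem k).mpr h), norm_one]
    · rw [coeff_ind, if_neg (fun hc => by have := (hmem (k+1)).mp hc; omega), norm_zero]
      exact norm_nonneg _
  -- G N π x = ∑_D
  have hG : b.G N π x = ∑ j ∈ D, b.e j := by
    rw [GreedyBasis.G, ← hπim, Finset.sum_image (fun a _ c _ h => π.injective h)]
    apply Finset.sum_congr rfl
    intro k hk
    rw [coeff_ind, if_pos (Finset.mem_union_left _ (hπD k (Finset.mem_range.mp hk))), one_smul]
  have hxG : x - b.G N π x = ∑ j ∈ A, b.e j := by
    have hCA : C \ D = A := Finset.union_sdiff_cancel_left hdisj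
    have hDC : D ⊆ C := Finset.subset_union_left
    rw [hG, hx, ← hCA, sub_eq_iff_eq_add]
    exact (Finset.sum_sdiff hDC).symm
  -- σt ≠ 0
  have hσpos : b.σt N x ≠ 0 := by
    have := inv_le_sigt b hK (N := N) (C := C) (by omega)
    intro h
    rw [h, le_zero_iff, ENNReal.inv_eq_zero] at this
    exact ENNReal.coe_ne_top this
  -- σt ≤ ‖1_B‖
  have hσB : b.σt N x ≤ (‖∑ j ∈ B, b.e j‖₊ : ℝ≥0∞) := by
    set E := (A \ B) ∪ (D \ (B \ A)) with hE
    have hEcard : E.card = N := by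
      have hd : Disjoint (A \ B) (D \ (B \ A)) :=
        Finset.disjoint_of_subset_left Finset.sdiff_subset
          (Finset.disjoint_of_subset_right Finset.sdiff_subset hdisj.symm)
      have e1 := Finset.card_inter_add_card_sdiff A B
      have e2 := Finset.card_inter_add_card_sdiff B A
      have e3 : (A ∩ B).card = (B ∩ A).card := by rw [Finset.inter_comm]
      have e4 : (D \ (B \ A)).card = N - (B \ A).card := by
        rw [Finset.card_sdiff_of_subset hBA, hDcard]
      have e5 : (B \ A).card ≤ N := le_trans (by omega) hnN
      rw [hE, Finset.card_union_of_disjoint hd, e4]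
      omega
    have hEC : E ⊆ C := by
      intro j hj
      rcases Finset.mem_union.mp hj with h | h
      · exact Finset.mem_union_right _ (Finset.sdiff_subset h)
      · exact Finset.mem_union_left _ (Finset.sdiff_subset h)
    have hECB : C \ E = B := by
      ext j
      have h1 : j ∈ D → j ∉ A := fun h => Finset.disjoint_left.mp hdisj h
      have h2 : j ∈ B → j ∉ A → j ∈ D := fun hb ha => hBA (Finset.mem_sdiff.mpr ⟨hb, ha⟩)
      simp only [hC, hE, Finset.mem_sdiff, Finset.mem_union]
      tauto
    calc b.σt N x ≤ (‖x - b.S E x‖₊ : ℝ≥0∞) := by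
          exact iInf₂_le E hEcard
      _ = (‖∑ j ∈ B, b.e j‖₊ : ℝ≥0∞) := by
          rw [hx, sub_S_ind, Finset.inter_eq_left.mpr hEC, hECB]
  -- assemble
  have hterm : (‖x - b.G N π x‖₊ : ℝ≥0∞) / b.σt N x ≤ b.CtN N :=
    le_iSup_of_le x (le_iSup_of_le π (le_iSup_of_le hg (le_iSup_of_le hσpos le_rfl)))
  refine le_trans ?_ hterm
  rw [hxG]
  exact ENNReal.div_le_div le_rfl hσB
private lemma inv_le_norm_ind (b : GreedyBasis 𝕜 X) {K : ℝ≥0} (hK : b.QuasiGreedy K)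
    (F : Finset ℕ) (hF : F.Nonempty) :
    ((K : ℝ≥0∞))⁻¹ ≤ (‖∑ j ∈ F, b.e j‖₊ : ℝ≥0∞) := by
  have h1 : (1 : ℝ) ≤ K * ‖∑ j ∈ F, b.e j‖ := one_le_mul_norm b hK F hF
  have hK0 : K ≠ 0 := by
    rintro rfl; simp at h1; linarith
  have hKpos : (0 : ℝ) < K := lt_of_le_of_ne (K.coe_nonneg) (by exact_mod_cast (Ne.symm hK0))
  have h2 : (K : ℝ)⁻¹ ≤ ‖∑ j ∈ F, b.e j‖ := by
    rw [inv_eq_one_div, div_le_iff₀ hKpos]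
    linarith
  rw [← ENNReal.coe_inv hK0, ENNReal.coe_le_coe, ← NNReal.coe_le_coe]
  simpa using h2

private lemma one_le_K (b : GreedyBasis 𝕜 X) {K : ℝ≥0} (hK : b.QuasiGreedy K) :
    (1 : ℝ≥0) ≤ K := by
  have h1 : (1 : ℝ) ≤ K * ‖∑ j ∈ ({0} : Finset ℕ), b.e j‖ :=
    one_le_mul_norm b hK {0} ⟨0, Finset.mem_singleton_self 0⟩
  rw [Finset.sum_singleton, b.norm_e, mul_one] at h1
  exact_mod_cast h1

private lemma hr_div_hl_le (b : GreedyBasis 𝕜 X) {K : ℝ≥0} (hK : b.QuasiGreedy K)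
    {N n : ℕ} (hn1 : 1 ≤ n) (hnN : n ≤ N) : b.hr n / b.hl n ≤ b.CtN N := by
  by_cases htop : b.CtN N = ⊤
  · rw [htop]; exact le_top
  have hKtop : ((K : ℝ≥0∞))⁻¹ ≠ 0 := ENNReal.inv_ne_zero.mpr ENNReal.coe_ne_top
  have hne : ∀ B : Finset ℕ, B.card = n → B.Nonempty := fun B hB =>
    Finset.card_pos.mp (by omega)
  have hlinv : ((K : ℝ≥0∞))⁻¹ ≤ b.hl n :=
    le_iInf fun B => le_iInf fun hB => inv_le_norm_ind b hK B (hne B hB)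
  have hl0 : b.hl n ≠ 0 := fun h => hKtop (le_antisymm (h ▸ hlinv) zero_le)
  have hltop : b.hl n ≠ ⊤ := by
    have : b.hl n ≤ (‖∑ j ∈ Finset.range n, b.e j‖₊ : ℝ≥0∞) :=
      iInf₂_le (Finset.range n) (Finset.card_range n)
    exact fun h => ENNReal.coe_ne_top (le_antisymm (h ▸ this) le_top).symm
  rw [ENNReal.div_le_iff hl0 hltop]
  refine iSup₂_le fun A hA => ?_
  have hAd : ∀ B : Finset ℕ, B.card = n →
      (‖∑ j ∈ A, b.e j‖₊ : ℝ≥0∞) ≤ b.CtN N * (‖∑ j ∈ B, b.e j‖₊ : ℝ≥0∞) := by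
    intro B hB
    have hB0 : (‖∑ j ∈ B, b.e j‖₊ : ℝ≥0∞) ≠ 0 :=
      fun h => hKtop (le_antisymm (h ▸ inv_le_norm_ind b hK B (hne B hB)) zero_le)
    exact (ENNReal.div_le_iff hB0 ENNReal.coe_ne_top).mp (key_div_le b hK hn1 hnN A B hA hB)
  have h2 : (‖∑ j ∈ A, b.e j‖₊ : ℝ≥0∞) / b.CtN N ≤ b.hl n := by
    refine le_iInf fun B => le_iInf fun hB => ?_
    have hB0 : (‖∑ j ∈ B, b.e j‖₊ : ℝ≥0∞) ≠ 0 :=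
      fun h => hKtop (le_antisymm (h ▸ inv_le_norm_ind b hK B (hne B hB)) zero_le)
    exact (ENNReal.div_le_iff_le_mul (Or.inr ENNReal.coe_ne_top) (Or.inr hB0)).mpr
      ((hAd B hB).trans_eq (mul_comm _ _))
  have := (ENNReal.div_le_iff_le_mul (Or.inr hltop) (Or.inl htop)).mp h2
  exact this.trans_eq (mul_comm _ _)

private lemma sigma_le_sigt (b : GreedyBasis 𝕜 X) (N : ℕ) (x : X) :
    b.σ N x ≤ b.σt N x := by
  refine le_iInf fun E => le_iInf fun hE => ?_
  have h : b.σ N x ≤ (‖x - ∑ j ∈ E, b.coeff j x • b.e j‖₊ : ℝ≥0∞) :=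
    iInf_le_of_le E (iInf_le_of_le hE.le (iInf_le _ (fun j => b.coeff j x)))
  rwa [← S_apply] at h

private lemma eq_G_of_sigma_zero (b : GreedyBasis 𝕜 X) {N : ℕ} {x : X} {π : Equiv.Perm ℕ}
    (hg : b.Greedy x π) (hσ : b.σ N x = 0) : x = b.G N π x := by
  have hanti : Antitone (fun k => ‖b.coeff (π k) x‖) := antitone_nat_of_succ_le hg
  have hN0 : ‖b.coeff (π N) x‖ = 0 := by
    have hle : ∀ δ : ℝ, 0 < δ → ‖b.coeff (π N) x‖ ≤ δ := by
      intro δ hδ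
      set M : ℝ := (∑ k ∈ Finset.range (N+1), ‖b.coeff (π k)‖) + 1 with hM
      have hMpos : 0 < M := by
        have : 0 ≤ ∑ k ∈ Finset.range (N+1), ‖b.coeff (π k)‖ :=
          Finset.sum_nonneg fun i _ => norm_nonneg _
        rw [hM]; linarith
      have hcb : ∀ k ∈ Finset.range (N+1), ‖b.coeff (π k)‖ ≤ M := by
        intro k hk
        have := Finset.single_le_sum (f := fun k => ‖b.coeff (π k)‖)
          (fun i _ => norm_nonneg _) hk
        rw [hM]; linarith
      have hlt0 : b.σ N x < ENNReal.ofReal (δ / M) := by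
        rw [hσ]; exact ENNReal.ofReal_pos.mpr (by positivity)
      rw [GreedyBasis.σ, iInf_lt_iff] at hlt0
      obtain ⟨A, hlt0⟩ := hlt0
      rw [iInf_lt_iff] at hlt0
      obtain ⟨hAcard, hlt0⟩ := hlt0
      rw [iInf_lt_iff] at hlt0
      obtain ⟨c, hlt⟩ := hlt0
      set y := ∑ j ∈ A, c j • b.e j with hy
      have hxy : ‖x - y‖ < δ / M := by
        rw [← enorm_eq_nnnorm, ← ofReal_norm] at hlt
        exact (ENNReal.ofReal_lt_ofReal_iff (by positivity)).mp hlt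
      have himcard : ((Finset.range (N+1)).image (fun k => π k)).card = N + 1 := by
        rw [Finset.card_image_of_injective _ (fun a b hab => π.injective hab),
          Finset.card_range]
      have hnsub : ¬ ((Finset.range (N+1)).image (fun k => π k) ⊆ A) := fun hsub => by
        have := Finset.card_le_card hsub
        omega
      obtain ⟨j, hjmem, hjA⟩ := Finset.not_subset.mp hnsub
      obtain ⟨k, hk, rfl⟩ := Finset.mem_image.mp hjmem
      rw [Finset.mem_range] at hk
      have hcy : b.coeff (π k) y = 0 := by
        rw [hy, map_sum]
        apply Finset.sum_eq_zero
        intro j hj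
        have hne : π k ≠ j := fun h => hjA (h ▸ hj)
        rw [map_smul, b.biorth, if_neg hne, smul_zero]
      have est : ‖b.coeff (π k) x‖ ≤ δ := by
        have heq : b.coeff (π k) x = b.coeff (π k) (x - y) := by
          rw [map_sub, hcy, sub_zero]
        rw [heq]
        calc ‖b.coeff (π k) (x - y)‖ ≤ ‖b.coeff (π k)‖ * ‖x - y‖ :=
              (b.coeff (π k)).le_opNorm _
          _ ≤ M * (δ / M) := by
              apply mul_le_mul (hcb k (Finset.mem_range.mpr hk)) hxy.le
                (norm_nonneg _) hMpos.le
          _ = δ := by field_simp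
      exact le_trans (hanti (by omega : k ≤ N)) est
    have h0 := le_of_forall_pos_le_add (a := ‖b.coeff (π N) x‖) (b := 0)
      (fun ε hε => by simpa using hle ε hε)
    exact le_antisymm h0 (norm_nonneg _)
  have hzero : ∀ j, j ∉ (Finset.range N).image (fun k => π k) → b.coeff j x = 0 := by
    intro j hj
    have hk : N ≤ π.symm j := by
      by_contra h
      push_neg at h
      exact hj (Finset.mem_image.mpr ⟨π.symm j, Finset.mem_range.mpr h, π.apply_symm_apply j⟩)
    have h1 : ‖b.coeff (π (π.symm j)) x‖ ≤ ‖b.coeff (π N) x‖ := hanti hk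
    rw [π.apply_symm_apply, hN0] at h1
    exact norm_le_zero_iff.mp h1
  set F := (Finset.range N).image (fun k => π k) with hF
  have hGF : b.G N π x = ∑ j ∈ F, b.coeff j x • b.e j := by
    rw [hF, Finset.sum_image (fun a _ c _ h => π.injective h)]
    rfl
  have hev : ∀ᶠ m in atTop, (∑ j ∈ Finset.range m, b.coeff j x • b.e j) = b.G N π x := by
    filter_upwards [eventually_ge_atTop ((F.sup id) + 1)] with m hm
    rw [hGF]
    refine (Finset.sum_subset (fun j hj => ?_) (fun j _ hj => ?_)).symm
    · have := Finset.le_sup (f := id) hj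
      simp only [id] at this
      exact Finset.mem_range.mpr (by omega)
    · rw [hzero j hj, zero_smul]
  have h1 : Tendsto (fun _ : ℕ => b.G N π x) atTop (nhds x) :=
    Tendsto.congr' hev (b.expansion x)
  exact tendsto_nhds_unique h1 tendsto_const_nhds

/-- For a quasi-greedy basis with constant `K`, the Lebesgue constants satisfy
`C_N ≥ C̃_N ≥ μ(N) / (3K)`. -/
theorem stmt3 (b : GreedyBasis 𝕜 X) (K : ℝ≥0) (hK : b.QuasiGreedy K) (N : ℕ) (hN : 1 ≤ N) :
    b.μ N / (3 * (K : ℝ≥0∞)) ≤ b.CtN N ∧ b.CtN N ≤ b.CN N := by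
  constructor
  · have hμ : b.μ N ≤ b.CtN N := by
      rw [GreedyBasis.μ]
      refine iSup₂_le fun n hn => ?_
      rw [Finset.mem_Icc] at hn
      exact hr_div_hl_le b hK hn.1 hn.2
    have h3K : (1 : ℝ≥0∞) ≤ 3 * (K : ℝ≥0∞) := by
      have h1 : (1 : ℝ≥0∞) ≤ (K : ℝ≥0∞) := by exact_mod_cast one_le_K b hK
      calc (1 : ℝ≥0∞) ≤ (K : ℝ≥0∞) := h1
        _ ≤ 3 * K := le_mul_of_one_le_left zero_le (by norm_num)
    calc b.μ N / (3 * (K : ℝ≥0∞)) ≤ b.μ N / 1 := ENNReal.div_le_div le_rfl h3K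
      _ = b.μ N := div_one _
      _ ≤ b.CtN N := hμ
  · rw [GreedyBasis.CtN]
    refine iSup_le fun x => iSup_le fun π => iSup_le fun hg => iSup_le fun hσt => ?_
    by_cases hσ : b.σ N x = 0
    · have hx0 : x - b.G N π x = 0 := sub_eq_zero.mpr (eq_G_of_sigma_zero b hg hσ)
      rw [hx0]
      simp
    · refine le_trans (ENNReal.div_le_div le_rfl (sigma_le_sigt b N x)) ?_
      exact le_iSup_of_le x (le_iSup_of_le π (le_iSup_of_le hg (le_iSup_of_le hσ le_rfl)))
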